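/- Let d ≥ 1, let p be a prime with p ∤ d, and let H ⊆ (ℤ/d)⁴ be a subgroup. Suppose that 𝔄_d ∩ H contains exactly one element a₀ of age 1, and let h denote the order of a₀ in (ℤ/d)⁴. Then the cardinality of 𝔈_d(0) ∩ H equals φ(h), and the cardinality of 𝔈_d(p) ∩ H equals 0 if p^ℓ ≡ −1 (mod h) for some positive integer ℓ, and equals φ(h) if p^ℓ ≢ −1 (mod h) for all positive integers ℓ, where φ is Euler's totient function. -/

import Mathlib

/-- `M_d`: quadruples in `(ℤ/d)⁴` whose coordinates sum to zero, with all coordinates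
nonzero (here: the subset `𝔄_d ⊆ M_d`). -/
def frakA (d : ℕ) : Set (Fin 4 → ZMod d) :=
  {a | (∑ i, a i = 0) ∧ ∀ i, a i ≠ 0}

/-- The age `S(a) = Σᵢ ⟨âᵢ/d⟩`, where `âᵢ ∈ ℤ` is any lift of `aᵢ` (we use the canonical
lift `(a i).val`; the fractional part is independent of the choice of lift). -/
noncomputable def age {d : ℕ} (a : Fin 4 → ZMod d) : ℚ :=
  ∑ i, Int.fract (((a i).val : ℚ) / d)

/-- `𝔅_d(0)`: elements of `𝔄_d` all of whose `(ℤ/d)ˣ`-multiples have age 2. -/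
noncomputable def frakB0 (d : ℕ) : Set (Fin 4 → ZMod d) :=
  {a ∈ frakA d | ∀ t : (ZMod d)ˣ, age (fun i => (t : ZMod d) * a i) = 2}

/-- `𝔈_d(0) = 𝔄_d \ 𝔅_d(0)` (denoted `𝔍_d(0)` in the paper). -/
noncomputable def frakE0 (d : ℕ) : Set (Fin 4 → ZMod d) :=
  frakA d \ frakB0 d

/-- `𝔅_d(p)` for a prime `p ∤ d`, where `f = orderOf (p : ZMod d)` is the multiplicative
order of `p` mod `d`: elements `a ∈ 𝔄_d` with `Σ_{j<f} S(t·pʲ·a) = 2f` for all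
`t ∈ (ℤ/d)ˣ`. -/
noncomputable def frakBp (d p : ℕ) : Set (Fin 4 → ZMod d) :=
  {a ∈ frakA d | ∀ t : (ZMod d)ˣ,
    ∑ j ∈ Finset.range (orderOf (p : ZMod d)),
      age (fun i => (t : ZMod d) * (p : ZMod d) ^ j * a i) =
        2 * (orderOf (p : ZMod d) : ℚ)}

/-- `𝔈_d(p) = 𝔄_d \ 𝔅_d(p)` (denoted `𝔍_d(p)` in the paper). -/
noncomputable def frakEp (d p : ℕ) : Set (Fin 4 → ZMod d) :=
  frakA d \ frakBp d p

/-- The orbit of `b ∈ (ℤ/d)⁴` under the cyclic subgroup `⟨p⟩ ⊆ (ℤ/d)ˣ`. -/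
def pOrbit (d p : ℕ) (b : Fin 4 → ZMod d) : Set (Fin 4 → ZMod d) :=
  {x | ∃ j : ℕ, x = fun i => (p : ZMod d) ^ j * b i}

/-!
Every element of `𝔄_d` has age `1`, `2` or `3`, and `S(b) + S(-b) = 4`. Hence an element of
`𝔄_d ∩ H` outside `𝔅_d(0)` has a unit multiple equal to `±a₀`, so `𝔈_d(0) ∩ H` is the orbit
`(ℤ/d)ˣ • a₀`, which `(ℤ/d)ˣ → (ℤ/h)ˣ` identifies with `(ℤ/h)ˣ`.

If `pˡ ≡ -1 (mod h)`, multiplication by `pˡ` negates every `u • a₀`, so along each `p`-orbit the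
ages pair up symmetrically around `2` and every sum in the definition of `𝔅_d(p)` equals `2f`.
Otherwise no `pʲ • a₀` has age `3` while `a₀` has age `1`, so the sum for `a₀` is below `2f`.
-/

open Finset

section Age

variable {d : ℕ}

lemma smul_mem_frakA {c : ZMod d} (hc : IsUnit c) {b : Fin 4 → ZMod d} (hb : b ∈ frakA d) :
    c • b ∈ frakA d :=
  ⟨by simp only [Pi.smul_apply, smul_eq_mul, ← Finset.mul_sum, hb.1, mul_zero],
    fun i => by simpa [hc.mul_right_eq_zero] using hb.2 i⟩

lemma neg_mem_frakA {b : Fin 4 → ZMod d} (hb : b ∈ frakA d) : -b ∈ frakA d := by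
  simpa using smul_mem_frakA isUnit_one.neg hb

variable [NeZero d]

lemma fract_val_div (a : ZMod d) : Int.fract ((a.val : ℚ) / d) = a.val / d := by
  rw [Int.fract_div_natCast_eq_div_natCast_mod, Nat.mod_eq_of_lt a.val_lt]

lemma age_eq_sum_val_div (b : Fin 4 → ZMod d) : age b = ((∑ i, (b i).val : ℕ) : ℚ) / d := by
  simp only [age, fract_val_div, Nat.cast_sum, Finset.sum_div]

lemma age_mem_frakA {b : Fin 4 → ZMod d} (hb : b ∈ frakA d) :
    age b = 1 ∨ age b = 2 ∨ age b = 3 := by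
  obtain ⟨k, hk⟩ : d ∣ ∑ i, (b i).val := by
    rw [← ZMod.natCast_eq_zero_iff]
    push_cast [ZMod.natCast_val, ZMod.cast_id']
    exact hb.1
  have hpos : 0 < ∑ i, (b i).val :=
    Finset.sum_pos (fun i _ => ZMod.val_pos.2 (hb.2 i)) univ_nonempty
  have hlt : ∑ i, (b i).val < d * 4 :=
    calc ∑ i, (b i).val < ∑ _i : Fin 4, d :=
          Finset.sum_lt_sum_of_nonempty univ_nonempty fun i _ => (b i).val_lt
      _ = d * 4 := by simp [mul_comm]
  rw [hk] at hpos hlt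
  have hk1 : 0 < k := Nat.pos_of_mul_pos_left hpos
  have hk3 : k < 4 := Nat.lt_of_mul_lt_mul_left hlt
  have hage : age b = k := by
    rw [age_eq_sum_val_div, hk, Nat.cast_mul, mul_div_cancel_left₀ _ (NeZero.ne _)]
  interval_cases k <;> simp [hage]

lemma age_add_age_neg {b : Fin 4 → ZMod d} (hb : ∀ i, b i ≠ 0) : age b + age (-b) = 4 := by
  have hneg : ∀ i, (((-b) i).val : ℚ) = d - (b i).val := fun i => by
    have : NeZero (b i) := ⟨hb i⟩
    rw [Pi.neg_apply, ZMod.val_neg_of_ne_zero, Nat.cast_sub (b i).val_lt.le]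
  rw [age_eq_sum_val_div, age_eq_sum_val_div, ← add_div]
  push_cast
  simp only [hneg, Finset.sum_sub_distrib, Finset.sum_const, Finset.card_univ, Fintype.card_fin]
  rw [add_sub_cancel, nsmul_eq_mul, mul_div_cancel_right₀ _ (NeZero.ne _)]
  norm_num

end Age

section Orbit

variable {d : ℕ} {M : Type*} [AddCommGroup M] [Module (ZMod d) M]

lemma addOrderOf_dvd_of_zmod_module (a : M) : addOrderOf a ∣ d :=
  addOrderOf_dvd_of_nsmul_eq_zero <| by
    rw [← Nat.cast_smul_eq_nsmul (ZMod d), ZMod.natCast_self, zero_smul]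

variable [NeZero d]

lemma ZMod.smul_eq_val_nsmul (c : ZMod d) (a : M) : c • a = c.val • a := by
  rw [← Nat.cast_smul_eq_nsmul (ZMod d), ZMod.natCast_zmod_val]

lemma smul_eq_smul_iff_cast_eq (a : M) (c c' : ZMod d) :
    c • a = c' • a ↔ (c.cast : ZMod (addOrderOf a)) = c'.cast := by
  rw [ZMod.smul_eq_val_nsmul, ZMod.smul_eq_val_nsmul, nsmul_eq_nsmul_iff_modEq,
    ZMod.cast_eq_val, ZMod.cast_eq_val, ZMod.natCast_eq_natCast_iff]

lemma ncard_range_units_smul (a : M) :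
    (Set.range fun u : (ZMod d)ˣ => (u : ZMod d) • a).ncard = Nat.totient (addOrderOf a) := by
  have hdvd := addOrderOf_dvd_of_zmod_module (d := d) a
  have : NeZero (addOrderOf a) := ⟨fun h => NeZero.ne d (Nat.eq_zero_of_zero_dvd (h ▸ hdvd))⟩
  set G : (ZMod (addOrderOf a))ˣ → M := fun v => (v : ZMod (addOrderOf a)).val • a
  have hG : (fun u : (ZMod d)ˣ => (u : ZMod d) • a) = G ∘ ZMod.unitsMap hdvd := by
    funext u
    simp only [G, Function.comp_apply, ZMod.unitsMap_val, ZMod.smul_eq_val_nsmul,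
      nsmul_eq_nsmul_iff_modEq, ← ZMod.natCast_eq_natCast_iff, ZMod.natCast_zmod_val,
      ZMod.cast_eq_val]
  have hGinj : Function.Injective G := fun v v' h => by
    rwa [nsmul_eq_nsmul_iff_modEq, ← ZMod.natCast_eq_natCast_iff, ZMod.natCast_zmod_val,
      ZMod.natCast_zmod_val, Units.val_inj] at h
  rw [hG, (ZMod.unitsMap_surjective hdvd).range_comp, Set.ncard_range_of_injective hGinj,
    Nat.card_eq_fintype_card, ZMod.card_units_eq_totient]

end Orbit

lemma Function.Periodic.sum_range_add {A : Type*} [AddCancelCommMonoid A] {G : ℕ → A} {f : ℕ}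
    (hG : Function.Periodic G f) (l : ℕ) :
    ∑ j ∈ range f, G (j + l) = ∑ j ∈ range f, G j := by
  induction l with
  | zero => rfl
  | succ l ih =>
    have h := (Finset.sum_range_succ (fun j => G (j + l)) f).symm.trans
      (Finset.sum_range_succ' (fun j => G (j + l)) f)
    rw [add_comm f l, hG l, zero_add, add_left_inj] at h
    rw [← ih, h]
    exact Finset.sum_congr rfl fun j _ => by rw [add_right_comm, add_assoc]

section Frobenius

variable {d : ℕ}

lemma frakB0_subset_frakBp {p : ℕ} (hp : IsUnit (p : ZMod d)) : frakB0 d ⊆ frakBp d p := by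
  rintro b ⟨hbA, hb⟩
  obtain ⟨s, hs⟩ := hp
  refine ⟨hbA, fun t => ?_⟩
  have hterm : ∀ j, age (fun i => (t : ZMod d) * (p : ZMod d) ^ j * b i) = 2 := fun j => by
    simpa [hs] using hb (t * s ^ j)
  rw [Finset.sum_congr rfl fun j _ => hterm j, Finset.sum_const, Finset.card_range, nsmul_eq_mul,
    mul_comm]

lemma frakEp_subset_frakE0 {p : ℕ} (hp : IsUnit (p : ZMod d)) : frakEp d p ⊆ frakE0 d :=
  Set.sdiff_subset_sdiff_right (frakB0_subset_frakBp hp)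

variable [NeZero d]

lemma sum_age_pow_smul_of_pow_smul_eq_neg {c : ZMod d} (hc : IsUnit c) {b : Fin 4 → ZMod d}
    (hb : ∀ i, b i ≠ 0) {l : ℕ} (hl : c ^ l • b = -b) :
    ∑ j ∈ range (orderOf c), age (c ^ j • b) = 2 * orderOf c := by
  set G : ℕ → ℚ := fun j => age (c ^ j • b) - 2
  have hper : Function.Periodic G (orderOf c) := fun j => by
    simp only [G, pow_add, pow_orderOf_eq_one, mul_one]
  have hanti : ∀ j, G (j + l) = -G j := fun j => by
    have hcb : ∀ i, (c ^ j • b) i ≠ 0 := fun i => by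
      simpa [(hc.pow j).mul_right_eq_zero] using hb i
    have := age_add_age_neg hcb
    simp only [G, pow_add, mul_smul, hl, smul_neg] at this ⊢
    linarith
  have hzero : ∑ j ∈ range (orderOf c), G j = 0 := by
    have := hper.sum_range_add l
    simp only [hanti, Finset.sum_neg_distrib] at this
    linarith
  simpa [G, Finset.sum_sub_distrib, mul_comm, sub_eq_zero] using hzero

lemma mem_frakBp_of_pow_smul_eq_neg {p : ℕ} (hp : IsUnit (p : ZMod d)) {b : Fin 4 → ZMod d}
    (hb : b ∈ frakA d) {l : ℕ} (hl : (p : ZMod d) ^ l • b = -b) : b ∈ frakBp d p := by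
  refine ⟨hb, fun t => ?_⟩
  have htb : (p : ZMod d) ^ l • (t : ZMod d) • b = -((t : ZMod d) • b) := by
    rw [smul_comm, hl, smul_neg]
  rw [← sum_age_pow_smul_of_pow_smul_eq_neg hp (smul_mem_frakA t.isUnit hb).2 htb]
  refine Finset.sum_congr rfl fun j _ => congrArg age (funext fun i => ?_)
  simp only [Pi.smul_apply, smul_eq_mul]
  ring

end Frobenius

section UniqueAgeOne

variable {d : ℕ} [NeZero d] {H : AddSubgroup (Fin 4 → ZMod d)} {a₀ : Fin 4 → ZMod d}

lemma eq_or_eq_neg_of_age_ne_two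
    (huniq : ∀ b, b ∈ frakA d → b ∈ H → age b = 1 → b = a₀)
    {b : Fin 4 → ZMod d} (hbA : b ∈ frakA d) (hbH : b ∈ H) (hb : age b ≠ 2) :
    b = a₀ ∨ b = -a₀ := by
  rcases age_mem_frakA hbA with h1 | h2 | h3
  · exact .inl (huniq b hbA hbH h1)
  · exact absurd h2 hb
  · have := age_add_age_neg hbA.2
    exact .inr (neg_eq_iff_eq_neg.1 (huniq _ (neg_mem_frakA hbA) (H.neg_mem hbH) (by linarith)))

lemma frakE0_inter_eq_range (ha₀A : a₀ ∈ frakA d) (ha₀H : a₀ ∈ H) (hage : age a₀ = 1)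
    (huniq : ∀ b, b ∈ frakA d → b ∈ H → age b = 1 → b = a₀) :
    frakE0 d ∩ H = Set.range fun u : (ZMod d)ˣ => (u : ZMod d) • a₀ := by
  ext x
  constructor
  · rintro ⟨⟨hxA, hxB⟩, hxH⟩
    obtain ⟨t, ht⟩ : ∃ t : (ZMod d)ˣ, age ((t : ZMod d) • x) ≠ 2 := by
      by_contra! h
      exact hxB ⟨hxA, h⟩
    rcases eq_or_eq_neg_of_age_ne_two huniq (smul_mem_frakA t.isUnit hxA)
      (ZMod.smul_mem hxH _) ht with h | h
    · refine ⟨t⁻¹, ?_⟩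
      dsimp only
      rw [← h, smul_smul, Units.inv_mul, one_smul]
    · refine ⟨-t⁻¹, ?_⟩
      dsimp only
      rw [Units.val_neg, neg_smul, ← smul_neg, ← h, smul_smul, Units.inv_mul, one_smul]
  · rintro ⟨u, rfl⟩
    refine ⟨⟨smul_mem_frakA u.isUnit ha₀A, fun hB => ?_⟩, ZMod.smul_mem ha₀H _⟩
    have h2 : age (((u⁻¹ : (ZMod d)ˣ) : ZMod d) • (u : ZMod d) • a₀) = 2 := hB.2 u⁻¹
    rw [smul_smul, Units.inv_mul, one_smul, hage] at h2
    norm_num at h2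

variable {p : ℕ}

lemma frakEp_inter_eq_empty (ha₀A : a₀ ∈ frakA d) (ha₀H : a₀ ∈ H) (hage : age a₀ = 1)
    (huniq : ∀ b, b ∈ frakA d → b ∈ H → age b = 1 → b = a₀) (hp : IsUnit (p : ZMod d))
    {l : ℕ} (hl : (p : ZMod d) ^ l • a₀ = -a₀) :
    frakEp d p ∩ H = ∅ := by
  refine Set.eq_empty_of_forall_notMem fun x hx => ?_
  obtain ⟨u, rfl⟩ : x ∈ Set.range fun u : (ZMod d)ˣ => (u : ZMod d) • a₀ := by
    rw [← frakE0_inter_eq_range ha₀A ha₀H hage huniq]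
    exact ⟨frakEp_subset_frakE0 hp hx.1, hx.2⟩
  refine hx.1.2 (mem_frakBp_of_pow_smul_eq_neg hp hx.1.1 (l := l) ?_)
  rw [smul_comm, hl, smul_neg]

lemma sum_age_pow_smul_lt (ha₀A : a₀ ∈ frakA d) (ha₀H : a₀ ∈ H) (hage : age a₀ = 1)
    (huniq : ∀ b, b ∈ frakA d → b ∈ H → age b = 1 → b = a₀) (hp : IsUnit (p : ZMod d))
    (hno : ∀ l, 0 < l → (p : ZMod d) ^ l • a₀ ≠ -a₀) :
    ∑ j ∈ range (orderOf (p : ZMod d)), age ((p : ZMod d) ^ j • a₀) <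
      2 * orderOf (p : ZMod d) := by
  have hle : ∀ j, age ((p : ZMod d) ^ j • a₀) ≤ 2 := by
    intro j
    rcases Nat.eq_zero_or_pos j with rfl | hj
    · rw [pow_zero, one_smul, hage]; norm_num
    have hmem := smul_mem_frakA (hp.pow j) ha₀A
    by_contra! hgt
    rcases eq_or_eq_neg_of_age_ne_two huniq hmem (ZMod.smul_mem ha₀H _) hgt.ne' with h | h
    · rw [h, hage] at hgt; norm_num at hgt
    · exact hno j hj h
  have hpos : 0 < orderOf (p : ZMod d) := hp.isOfFinOrder.orderOf_pos
  calc ∑ j ∈ range (orderOf (p : ZMod d)), age ((p : ZMod d) ^ j • a₀)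
      < ∑ _j ∈ range (orderOf (p : ZMod d)), (2 : ℚ) :=
        Finset.sum_lt_sum (fun j _ => hle j)
          ⟨0, Finset.mem_range.2 hpos, by rw [pow_zero, one_smul, hage]; norm_num⟩
    _ = 2 * orderOf (p : ZMod d) := by simp [mul_comm]

lemma frakEp_inter_eq_frakE0_inter (ha₀A : a₀ ∈ frakA d) (ha₀H : a₀ ∈ H) (hage : age a₀ = 1)
    (huniq : ∀ b, b ∈ frakA d → b ∈ H → age b = 1 → b = a₀) (hp : IsUnit (p : ZMod d))
    (hno : ∀ l, 0 < l → (p : ZMod d) ^ l • a₀ ≠ -a₀) :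
    frakEp d p ∩ H = frakE0 d ∩ H := by
  refine (Set.inter_subset_inter_left _ (frakEp_subset_frakE0 hp)).antisymm ?_
  rw [frakE0_inter_eq_range ha₀A ha₀H hage huniq]
  rintro _ ⟨u, rfl⟩
  refine ⟨⟨smul_mem_frakA u.isUnit ha₀A, fun hB => ?_⟩, ZMod.smul_mem ha₀H _⟩
  have hsum := hB.2 u⁻¹
  have hterm : ∀ j, (fun i => ((u⁻¹ : (ZMod d)ˣ) : ZMod d) * (p : ZMod d) ^ j *
      ((u : ZMod d) • a₀) i) = (p : ZMod d) ^ j • a₀ := fun j => funext fun i => by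
    simp only [Pi.smul_apply, smul_eq_mul]
    linear_combination ((p : ZMod d) ^ j * a₀ i) * u.inv_mul
  simp only [hterm] at hsum
  exact (sum_age_pow_smul_lt ha₀A ha₀H hage huniq hp hno).ne hsum

end UniqueAgeOne

/-- Suppose `𝔄_d ∩ H` contains exactly one element `a₀` of age 1, of additive order `h`, and
`p` is a prime not dividing `d`.  Then `#(𝔈_d(0) ∩ H) = φ(h)`, and `#(𝔈_d(p) ∩ H)` equals
`0` if `pˡ ≡ −1 (mod h)` for some `ℓ ≥ 1`, and equals `φ(h)` otherwise. -/
theorem card_frakE_inter (d : ℕ) (hd : 1 ≤ d) (p : ℕ) (hp : p.Prime)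
    (hpd : ¬ p ∣ d) (H : AddSubgroup (Fin 4 → ZMod d))
    (a₀ : Fin 4 → ZMod d) (ha₀A : a₀ ∈ frakA d) (ha₀H : a₀ ∈ H) (hage : age a₀ = 1)
    (huniq : ∀ b, b ∈ frakA d → b ∈ H → age b = 1 → b = a₀) :
    (frakE0 d ∩ H).ncard = Nat.totient (addOrderOf a₀) ∧
    ((∃ ℓ : ℕ, 0 < ℓ ∧ (p : ZMod (addOrderOf a₀)) ^ ℓ = -1) →
        (frakEp d p ∩ H).ncard = 0) ∧
    ((∀ ℓ : ℕ, 0 < ℓ → (p : ZMod (addOrderOf a₀)) ^ ℓ ≠ -1) →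
        (frakEp d p ∩ H).ncard = Nat.totient (addOrderOf a₀)) := by
  have : NeZero d := ⟨by omega⟩
  have hpu : IsUnit (p : ZMod d) := (ZMod.isUnit_prime_iff_not_dvd hp).2 hpd
  have hcard : (frakE0 d ∩ H).ncard = Nat.totient (addOrderOf a₀) := by
    rw [frakE0_inter_eq_range ha₀A ha₀H hage huniq, ncard_range_units_smul]
  have hpow : ∀ ℓ : ℕ, (p : ZMod d) ^ ℓ • a₀ = -a₀ ↔ (p : ZMod (addOrderOf a₀)) ^ ℓ = -1 := by
    intro ℓ
    have hdvd := addOrderOf_dvd_of_zmod_module (d := d) a₀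
    rw [← neg_one_smul (ZMod d) a₀, smul_eq_smul_iff_cast_eq, ZMod.cast_pow hdvd,
      ZMod.cast_natCast hdvd, ZMod.cast_neg hdvd, ZMod.cast_one hdvd]
  refine ⟨hcard, fun ⟨ℓ, _, hℓ⟩ => ?_, fun hno => ?_⟩
  · rw [frakEp_inter_eq_empty ha₀A ha₀H hage huniq hpu ((hpow ℓ).2 hℓ), Set.ncard_empty]
  · rw [frakEp_inter_eq_frakE0_inter ha₀A ha₀H hage huniq hpu
      fun ℓ hℓ h => hno ℓ hℓ ((hpow ℓ).1 h), hcard]
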